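/- arXiv:dg-ga/9707001 — 4 statements merged into one kernel-verified Lean document; each statement's English description precedes it below -/
import Mathlib

section
/- Let Gᴬ_{μρ} : ℝᵐ × ℝᴺ × ℝ^{N×m} → ℝ (A = 1,…,N; μ, ρ = 1,…,m) be smooth functions of the variables (xᵘ, yᴬ, vᴬ_μ), and for each μ define the vector field Xᵤ on ℝᵐ × ℝᴺ × ℝ^{N×m} by Xᵤ = ∂/∂xᵘ + Σ_A vᴬ_μ ∂/∂yᴬ + Σ_{A,ρ} Gᴬ_{μρ} ∂/∂vᴬ_ρ. Then for all μ, η and every point p, the Lie bracket [Xᵤ, X_η](p) lies in the linear span of {X₁(p), …, Xₘ(p)} if and only if at p: (a) Gᴮ_{μη} − Gᴮ_{ημ} = 0 for every B, and (b) for every B, ρ: ∂Gᴮ_{ηρ}/∂xᵘ + Σ_A vᴬ_μ ∂Gᴮ_{ηρ}/∂yᴬ + Σ_{A,γ} Gᴬ_{μγ} ∂Gᴮ_{ηρ}/∂vᴬ_γ − ∂Gᴮ_{μρ}/∂x^η − Σ_A vᴬ_η ∂Gᴮ_{μρ}/∂yᴬ − Σ_{A,γ} Gᴬ_{ηγ}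 ∂Gᴮ_{μρ}/∂vᴬ_γ = 0. -/
lemma phi_decomp {m N : ℕ} (φ : ((Fin m → ℝ) × (Fin N → ℝ) × (Fin N → Fin m → ℝ)) →L[ℝ] ℝ)
    (a : Fin m → ℝ) (b : Fin N → ℝ) (c : Fin N → Fin m → ℝ) :
    φ (a, b, c) = φ (a, 0, 0) + ∑ A, b A * φ (0, Pi.single A 1, 0)
      + ∑ A, ∑ γ, c A γ * φ (0, 0, Pi.single A (Pi.single γ 1)) := by
  have hb : ((0 : Fin m → ℝ), b, (0 : Fin N → Fin m → ℝ))
      = ∑ A, b A • ((0 : Fin m → ℝ), (Pi.single A 1 : Fin N → ℝ),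
          (0 : Fin N → Fin m → ℝ)) := by
    refine Prod.ext ?_ (Prod.ext ?_ ?_)
    · simp [Prod.fst_sum]
    · rw [Prod.snd_sum, Prod.fst_sum]
      ext B
      simp [Finset.sum_apply, Pi.single_apply]
    · simp [Prod.snd_sum]
  have hc : ((0 : Fin m → ℝ), (0 : Fin N → ℝ), c)
      = ∑ A, ∑ γ, c A γ • ((0 : Fin m → ℝ), (0 : Fin N → ℝ),
          (Pi.single A (Pi.single γ 1) : Fin N → Fin m → ℝ)) := by
    refine Prod.ext ?_ (Prod.ext ?_ ?_)
    · simp [Prod.fst_sum]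
    · simp [Prod.snd_sum, Prod.fst_sum]
    · simp only [Prod.snd_sum, Prod.smul_mk, smul_zero, Prod.snd]
      ext B δ
      simp [Finset.sum_apply, Pi.single_apply,
        apply_ite (fun f : Fin m → ℝ => f δ)]
  have h : (a, b, c) = (a, (0:Fin N → ℝ), (0:Fin N → Fin m → ℝ))
      + ((0:Fin m → ℝ), b, (0:Fin N → Fin m → ℝ))
      + ((0:Fin m → ℝ), (0:Fin N → ℝ), c) := by
    simp [Prod.ext_iff]
  rw [h, map_add, map_add, hb, hc, map_sum, map_sum]
  simp only [map_smul, smul_eq_mul, map_sum]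


/-- For the vector fields `Xᵤ = ∂/∂xᵘ + vᴬ_μ ∂/∂yᴬ + Gᴬ_{μρ} ∂/∂vᴬ_ρ` of a semi-holonomic
(SOPDE) multivector field on the jet bundle of the trivial bundle `ℝᵐ × ℝᴺ → ℝᵐ`, the Lie
bracket `[Xᵤ, X_η](p)` lies in the span of `X₁(p), …, Xₘ(p)` if and only if the symmetry
conditions `Gᴮ_{μη} = Gᴮ_{ημ}` and the vanishing-curvature conditions hold at `p`. -/
theorem sopde_bracket_mem_span_iff (m N : ℕ)
    (G : Fin N → Fin m → Fin m →
      ((Fin m → ℝ) × (Fin N → ℝ) × (Fin N → Fin m → ℝ)) → ℝ)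
    (hG : ∀ A μ ρ, ContDiff ℝ (⊤ : ℕ∞) (G A μ ρ))
    (X : Fin m → ((Fin m → ℝ) × (Fin N → ℝ) × (Fin N → Fin m → ℝ)) →
      (Fin m → ℝ) × (Fin N → ℝ) × (Fin N → Fin m → ℝ))
    (hX : ∀ μ, X μ = fun p =>
      (Pi.single μ 1, fun A => p.2.2 A μ, fun A ρ => G A μ ρ p)) :
    ∀ (μ η : Fin m) (p : (Fin m → ℝ) × (Fin N → ℝ) × (Fin N → Fin m → ℝ)),
      VectorField.lieBracket ℝ (X μ) (X η) p ∈
          Submodule.span ℝ (Set.range fun ρ => X ρ p)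
      ↔ ((∀ B : Fin N, G B μ η p - G B η μ p = 0) ∧
          ∀ (B : Fin N) (ρ : Fin m),
            fderiv ℝ (G B η ρ) p (Pi.single μ 1, 0, 0)
              + ∑ A : Fin N, p.2.2 A μ * fderiv ℝ (G B η ρ) p (0, Pi.single A 1, 0)
              + ∑ A : Fin N, ∑ γ : Fin m, G A μ γ p *
                  fderiv ℝ (G B η ρ) p (0, 0, Pi.single A (Pi.single γ 1))
              - fderiv ℝ (G B μ ρ) p (Pi.single η 1, 0, 0)
              - ∑ A : Fin N, p.2.2 A η * fderiv ℝ (G B μ ρ) p (0, Pi.single A 1, 0)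
              - ∑ A : Fin N, ∑ γ : Fin m, G A η γ p *
                  fderiv ℝ (G B μ ρ) p (0, 0, Pi.single A (Pi.single γ 1)) = 0) := by
  intro μ η p
  -- the derivative of each `X ν` at `p`
  have hd : ∀ ν : Fin m, HasFDerivAt (X ν)
      (((0 : ((Fin m → ℝ) × (Fin N → ℝ) × (Fin N → Fin m → ℝ)) →L[ℝ] (Fin m → ℝ))).prod
        ((ContinuousLinearMap.pi fun A : Fin N => (ContinuousLinearMap.proj ν).comp
            ((ContinuousLinearMap.proj A).comp
              ((ContinuousLinearMap.snd ℝ (Fin N → ℝ) (Fin N → Fin m → ℝ)).comp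
                (ContinuousLinearMap.snd ℝ (Fin m → ℝ)
                  ((Fin N → ℝ) × (Fin N → Fin m → ℝ)))))).prod
          (ContinuousLinearMap.pi fun A => ContinuousLinearMap.pi fun ρ =>
            fderiv ℝ (G A ν ρ) p))) p := by
    intro ν
    rw [hX ν]
    refine HasFDerivAt.prodMk (hasFDerivAt_const _ _) (HasFDerivAt.prodMk ?_ ?_)
    · exact (ContinuousLinearMap.pi fun A : Fin N => (ContinuousLinearMap.proj ν).comp
        ((ContinuousLinearMap.proj A).comp
          ((ContinuousLinearMap.snd ℝ (Fin N → ℝ) (Fin N → Fin m → ℝ)).comp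
            (ContinuousLinearMap.snd ℝ (Fin m → ℝ)
              ((Fin N → ℝ) × (Fin N → Fin m → ℝ)))))).hasFDerivAt
    · exact hasFDerivAt_pi.2 fun A => hasFDerivAt_pi.2 fun ρ =>
        ((hG A ν ρ).differentiable (by simp)).differentiableAt.hasFDerivAt
  -- the value of the Lie bracket
  have hbr : VectorField.lieBracket ℝ (X μ) (X η) p =
      ((0 : Fin m → ℝ), (fun A => G A μ η p - G A η μ p),
        fun A ρ => fderiv ℝ (G A η ρ) p (X μ p) - fderiv ℝ (G A μ ρ) p (X η p)) := by
    simp only [VectorField.lieBracket, (hd μ).fderiv, (hd η).fderiv]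
    refine Prod.ext ?_ (Prod.ext ?_ ?_)
    · simp
    · funext A
      simp [hX μ, hX η]
    · rfl
  -- the expansion of linear functionals on `X ν p`
  have hexp : ∀ (φ : ((Fin m → ℝ) × (Fin N → ℝ) × (Fin N → Fin m → ℝ)) →L[ℝ] ℝ)
      (ν : Fin m), φ (X ν p) = φ (Pi.single ν 1, 0, 0)
        + ∑ A, p.2.2 A ν * φ (0, Pi.single A 1, 0)
        + ∑ A, ∑ γ, G A ν γ p * φ (0, 0, Pi.single A (Pi.single γ 1)) := by
    intro φ ν
    rw [hX ν]
    exact phi_decomp φ _ _ _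
  rw [hbr, Submodule.mem_span_range_iff_exists_fun]
  constructor
  · rintro ⟨c, hc⟩
    have hc0 : c = 0 := by
      have h1 := congrArg Prod.fst hc
      rw [Prod.fst_sum] at h1
      funext u
      have h2 := congrFun h1 u
      simp only [hX, Finset.sum_apply, Prod.smul_fst, Pi.smul_apply, Pi.single_apply,
        smul_eq_mul, mul_ite, mul_one, mul_zero, Finset.sum_ite_eq, Finset.mem_univ,
        if_true] at h2
      simpa using h2
    rw [hc0] at hc
    simp only [Pi.zero_apply, zero_smul, Finset.sum_const_zero] at hc
    obtain ⟨-, h2, h3⟩ : _ ∧ _ ∧ _ := by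
      rw [Prod.ext_iff, Prod.ext_iff] at hc
      exact ⟨hc.1, hc.2.1, hc.2.2⟩
    constructor
    · intro B
      exact congrFun h2.symm B
    · intro B ρ
      have h4 := congrFun (congrFun h3.symm B) ρ
      dsimp only at h4
      simp only [Prod.snd_zero, Pi.zero_apply] at h4
      rw [hexp _ μ, hexp _ η] at h4
      linarith
  · rintro ⟨ha, hb⟩
    refine ⟨0, ?_⟩
    simp only [Pi.zero_apply, zero_smul, Finset.sum_const_zero]
    symm
    refine Prod.ext rfl (Prod.ext ?_ ?_)
    · funext B
      simpa using ha B
    · funext B ρ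
      have h4 := hb B ρ
      dsimp only
      rw [hexp (fderiv ℝ (G B η ρ) p) μ, hexp (fderiv ℝ (G B μ ρ) p) η]
      simp only [Pi.zero_apply, Prod.snd_zero]
      linarith
end

section
/- Let U ⊆ ℝ² be a nonempty open connected set and let f₁, f₂ : U → ℝ be C² functions. Then (f₁, f₂) satisfies on U the system ∂f₁/∂x₁ = f₁−x₁−x₂, ∂f₁/∂x₂ = f₁²−x₁²−x₂²−2x₁−2x₂−2x₁x₂, ∂f₂/∂x₁ = −f₂+x₁+x₂, ∂f₂/∂x₂ = 1, if and only if f₁(x₁,x₂) = x₁+x₂+1 for all (x₁,x₂) ∈ U and there exists a constant c ∈ ℝ such that f₂(x₁,x₂) = x₁+x₂−1+c·e^{−x₁} for all (x₁,x₂) ∈ U. -/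
open Topology Filter

/-- Local constancy + connectedness: a function constant near each point of an open
connected set is constant on it. -/
private lemma const_of_locally_const {U : Set (ℝ × ℝ)} (hU : IsOpen U)
    (hconn : IsConnected U) (h : ℝ × ℝ → ℝ)
    (hloc : ∀ x ∈ U, ∀ᶠ y in 𝓝 x, h y = h x) (x₀ : ℝ × ℝ) (hx₀ : x₀ ∈ U) :
    ∀ z ∈ U, h z = h x₀ := by
  set A : Set (ℝ × ℝ) := {z | z ∈ U ∧ h z = h x₀} with hA
  set B : Set (ℝ × ℝ) := {z | z ∈ U ∧ h z ≠ h x₀} with hB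
  have hAo : IsOpen A := by
    rw [isOpen_iff_mem_nhds]
    rintro z ⟨hzU, hz⟩
    filter_upwards [hloc z hzU, hU.mem_nhds hzU] with y hy hyU
    exact ⟨hyU, hy.trans hz⟩
  have hBo : IsOpen B := by
    rw [isOpen_iff_mem_nhds]
    rintro z ⟨hzU, hz⟩
    filter_upwards [hloc z hzU, hU.mem_nhds hzU] with y hy hyU
    exact ⟨hyU, hy ▸ hz⟩
  have hdisj : Disjoint A B := by
    rw [Set.disjoint_left]
    rintro z ⟨_, hz⟩ ⟨_, hz'⟩
    exact hz' hz
  have hcover : U ⊆ A ∪ B := by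
    intro z hz
    by_cases hc : h z = h x₀
    · exact Or.inl ⟨hz, hc⟩
    · exact Or.inr ⟨hz, hc⟩
  rcases hconn.isPreconnected.subset_or_subset hAo hBo hdisj hcover with hs | hs
  · exact fun z hz => (hs hz).2
  · exact absurd ((hs hx₀).2 rfl) (not_false)

/-- On a nonempty open connected set `U ⊆ ℝ²`, a pair of `C²` functions `(f₁, f₂)` solves the
example system of first-order PDEs if and only if `f₁ = x₁ + x₂ + 1` and
`f₂ = x₁ + x₂ − 1 + c·e^{−x₁}` for some constant `c`. -/
theorem example_system_solutions
    (U : Set (ℝ × ℝ)) (hU : IsOpen U) (hne : U.Nonempty) (hconn : IsConnected U)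
    (f₁ f₂ : ℝ × ℝ → ℝ) (hf₁ : ContDiffOn ℝ 2 f₁ U) (hf₂ : ContDiffOn ℝ 2 f₂ U) :
    (∀ z ∈ U,
      fderiv ℝ f₁ z (1, 0) = f₁ z - z.1 - z.2 ∧
      fderiv ℝ f₁ z (0, 1) =
        (f₁ z) ^ 2 - z.1 ^ 2 - z.2 ^ 2 - 2 * z.1 - 2 * z.2 - 2 * z.1 * z.2 ∧
      fderiv ℝ f₂ z (1, 0) = -f₂ z + z.1 + z.2 ∧
      fderiv ℝ f₂ z (0, 1) = 1)
    ↔ ((∀ z ∈ U, f₁ z = z.1 + z.2 + 1) ∧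
        ∃ c : ℝ, ∀ z ∈ U, f₂ z = z.1 + z.2 - 1 + c * Real.exp (-z.1)) := by
  obtain ⟨x₀, hx₀⟩ := hne
  constructor
  · intro h
    -- Step 1: (f₁ z - z.1 - z.2)^2 = 1 on U, by equality of mixed partials.
    have hsq : ∀ x ∈ U, (f₁ x - x.1 - x.2) ^ 2 = 1 := by
      intro x hx
      have hx' : ContDiffAt ℝ 2 f₁ x := hf₁.contDiffAt (hU.mem_nhds hx)
      have hdx : DifferentiableAt ℝ f₁ x := hx'.differentiableAt two_ne_zero
      have hF : DifferentiableAt ℝ (fderiv ℝ f₁) x :=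
        (hx'.fderiv_right (m := 1) (by norm_num)).differentiableAt one_ne_zero
      have hsym := hx'.isSymmSndFDerivAt (by simp)
      have heval : ∀ v : ℝ × ℝ, fderiv ℝ (fun z => fderiv ℝ f₁ z v) x
          = (fderiv ℝ (fderiv ℝ f₁) x).flip v := by
        intro v
        rw [fderiv_clm_apply hF (differentiableAt_const v)]
        simp
      have e1 : fderiv ℝ (fun z => fderiv ℝ f₁ z (1, 0)) x
          = fderiv ℝ (fun z : ℝ × ℝ => f₁ z - z.1 - z.2) x := by
        apply Filter.EventuallyEq.fderiv_eq
        filter_upwards [hU.mem_nhds hx] with z hz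
        exact (h z hz).1
      have d1 : HasFDerivAt (fun z : ℝ × ℝ => f₁ z - z.1 - z.2)
          (fderiv ℝ f₁ x - ContinuousLinearMap.fst ℝ ℝ ℝ - ContinuousLinearMap.snd ℝ ℝ ℝ) x :=
        (hdx.hasFDerivAt.sub hasFDerivAt_fst).sub hasFDerivAt_snd
      have m1 : fderiv ℝ (fderiv ℝ f₁) x (0, 1) (1, 0) = fderiv ℝ f₁ x (0, 1) - 1 := by
        have := (heval (1, 0)).symm.trans (e1.trans d1.fderiv)
        have := congrArg (fun L => L ((0 : ℝ), (1 : ℝ))) this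
        simpa using this
      have e2 : fderiv ℝ (fun z => fderiv ℝ f₁ z (0, 1)) x
          = fderiv ℝ (fun z : ℝ × ℝ => f₁ z * f₁ z - z.1 * z.1 - z.2 * z.2
              - 2 * z.1 - 2 * z.2 - 2 * z.1 * z.2) x := by
        apply Filter.EventuallyEq.fderiv_eq
        filter_upwards [hU.mem_nhds hx] with z hz
        rw [(h z hz).2.1]; ring
      have d2 : HasFDerivAt (fun z : ℝ × ℝ => f₁ z * f₁ z - z.1 * z.1 - z.2 * z.2
              - 2 * z.1 - 2 * z.2 - 2 * z.1 * z.2)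
          (((((f₁ x • fderiv ℝ f₁ x + f₁ x • fderiv ℝ f₁ x)
            - (x.1 • ContinuousLinearMap.fst ℝ ℝ ℝ + x.1 • ContinuousLinearMap.fst ℝ ℝ ℝ))
            - (x.2 • ContinuousLinearMap.snd ℝ ℝ ℝ + x.2 • ContinuousLinearMap.snd ℝ ℝ ℝ))
            - (2 : ℝ) • ContinuousLinearMap.fst ℝ ℝ ℝ)
            - (2 : ℝ) • ContinuousLinearMap.snd ℝ ℝ ℝ
            - ((2 * x.1) • ContinuousLinearMap.snd ℝ ℝ ℝ
              + x.2 • ((2 : ℝ) • ContinuousLinearMap.fst ℝ ℝ ℝ))) x :=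
        (((((hdx.hasFDerivAt.mul hdx.hasFDerivAt).sub
          (hasFDerivAt_fst.mul hasFDerivAt_fst)).sub
          (hasFDerivAt_snd.mul hasFDerivAt_snd)).sub
          (hasFDerivAt_fst.const_mul 2)).sub
          (hasFDerivAt_snd.const_mul 2)).sub
          ((hasFDerivAt_fst.const_mul 2).mul hasFDerivAt_snd)
      have m2 : fderiv ℝ (fderiv ℝ f₁) x (1, 0) (0, 1)
          = 2 * f₁ x * fderiv ℝ f₁ x (1, 0) - 2 * x.1 - 2 - 2 * x.2 := by
        have := (heval (0, 1)).symm.trans (e2.trans d2.fderiv)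
        have := congrArg (fun L => L ((1 : ℝ), (0 : ℝ))) this
        simp at this
        rw [this]; ring
      have key := (hsym (0, 1) (1, 0)).trans m2
      rw [m1, (h x hx).1, (h x hx).2.1] at key
      nlinarith [key]
    -- Step 2: by connectedness, f₁ - x₁ - x₂ is identically 1 or identically -1 on U.
    have hgc : ContinuousOn (fun z : ℝ × ℝ => f₁ z - z.1 - z.2) U :=
      (hf₁.continuousOn.sub continuous_fst.continuousOn).sub continuous_snd.continuousOn
    have hAo : IsOpen (U ∩ (fun z : ℝ × ℝ => f₁ z - z.1 - z.2) ⁻¹' Set.Ioi 0) :=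
      hgc.isOpen_inter_preimage hU isOpen_Ioi
    have hBo : IsOpen (U ∩ (fun z : ℝ × ℝ => f₁ z - z.1 - z.2) ⁻¹' Set.Iio 0) :=
      hgc.isOpen_inter_preimage hU isOpen_Iio
    have hdisj : Disjoint (U ∩ (fun z : ℝ × ℝ => f₁ z - z.1 - z.2) ⁻¹' Set.Ioi 0)
        (U ∩ (fun z : ℝ × ℝ => f₁ z - z.1 - z.2) ⁻¹' Set.Iio 0) := by
      rw [Set.disjoint_left]
      rintro z ⟨_, hz1⟩ ⟨_, hz2⟩
      have h1 : (0 : ℝ) < f₁ z - z.1 - z.2 := hz1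
      have h2 : f₁ z - z.1 - z.2 < 0 := hz2
      linarith
    have hcover : U ⊆ (U ∩ (fun z : ℝ × ℝ => f₁ z - z.1 - z.2) ⁻¹' Set.Ioi 0)
        ∪ (U ∩ (fun z : ℝ × ℝ => f₁ z - z.1 - z.2) ⁻¹' Set.Iio 0) := by
      intro z hz
      rcases lt_trichotomy (f₁ z - z.1 - z.2) 0 with hlt | heq | hgt
      · exact Or.inr ⟨hz, hlt⟩
      · exfalso; have := hsq z hz; rw [heq] at this; norm_num at this
      · exact Or.inl ⟨hz, hgt⟩
    have hf₁eq : ∀ z ∈ U, f₁ z = z.1 + z.2 + 1 := by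
      rcases hconn.isPreconnected.subset_or_subset hAo hBo hdisj hcover with hs | hs
      · intro z hz
        have h1 := hsq z hz
        have h2 : 0 < f₁ z - z.1 - z.2 := (hs hz).2
        nlinarith
      · -- the negative branch contradicts the first PDE
        exfalso
        have hval : ∀ z ∈ U, f₁ z = z.1 + z.2 - 1 := by
          intro z hz
          have h1 := hsq z hz
          have h2 : f₁ z - z.1 - z.2 < 0 := (hs hz).2
          nlinarith
        have e0 : fderiv ℝ f₁ x₀ = fderiv ℝ (fun z : ℝ × ℝ => z.1 + z.2 - 1) x₀ := by
          apply Filter.EventuallyEq.fderiv_eq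
          filter_upwards [hU.mem_nhds hx₀] with z hz
          exact hval z hz
        have d0 : HasFDerivAt (fun z : ℝ × ℝ => z.1 + z.2 - 1)
            (ContinuousLinearMap.fst ℝ ℝ ℝ + ContinuousLinearMap.snd ℝ ℝ ℝ) x₀ :=
          (hasFDerivAt_fst.add hasFDerivAt_snd).sub_const 1
        have hv : fderiv ℝ f₁ x₀ (1, 0) = 1 := by
          rw [e0, d0.fderiv]; simp
        have := (h x₀ hx₀).1
        rw [hv, hval x₀ hx₀] at this
        linarith
    refine ⟨hf₁eq, ?_⟩
    -- Step 3: (f₂ - x₁ - x₂ + 1) * exp x₁ has zero derivative on U.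
    have hzero : ∀ x ∈ U,
        HasFDerivAt (fun z : ℝ × ℝ => (f₂ z - z.1 - z.2 + 1) * Real.exp z.1)
          (0 : (ℝ × ℝ) →L[ℝ] ℝ) x := by
      intro x hx
      have hdx : DifferentiableAt ℝ f₂ x :=
        (hf₂.contDiffAt (hU.mem_nhds hx)).differentiableAt two_ne_zero
      have hE : HasFDerivAt (fun z : ℝ × ℝ => Real.exp z.1)
          (Real.exp x.1 • ContinuousLinearMap.fst ℝ ℝ ℝ) x := hasFDerivAt_fst.exp
      have hg : HasFDerivAt (fun z : ℝ × ℝ => f₂ z - z.1 - z.2 + 1)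
          (fderiv ℝ f₂ x - ContinuousLinearMap.fst ℝ ℝ ℝ - ContinuousLinearMap.snd ℝ ℝ ℝ) x :=
        ((hdx.hasFDerivAt.sub hasFDerivAt_fst).sub hasFDerivAt_snd).add_const 1
      have hmul := hg.mul hE
      refine hmul.congr_fderiv ?_
      apply ContinuousLinearMap.ext
      intro v
      have hv : (v : ℝ × ℝ) = v.1 • ((1 : ℝ), (0 : ℝ)) + v.2 • ((0 : ℝ), (1 : ℝ)) := by
        simp [Prod.ext_iff]
      have hfv : fderiv ℝ f₂ x v = v.1 * (-f₂ x + x.1 + x.2) + v.2 * 1 := by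
        rw [hv, map_add, map_smul, map_smul, (h x hx).2.2.1, (h x hx).2.2.2]
        simp
      simp only [ContinuousLinearMap.add_apply, ContinuousLinearMap.smul_apply,
        ContinuousLinearMap.sub_apply, ContinuousLinearMap.coe_fst', ContinuousLinearMap.coe_snd',
        ContinuousLinearMap.zero_apply, smul_eq_mul]
      rw [hfv]; ring
    -- Step 4: hence it is locally constant, so constant on U.
    have hloc : ∀ x ∈ U,
        ∀ᶠ y in 𝓝 x, (f₂ y - y.1 - y.2 + 1) * Real.exp y.1
          = (f₂ x - x.1 - x.2 + 1) * Real.exp x.1 := by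
      intro x hx
      obtain ⟨ε, hε, hball⟩ := Metric.isOpen_iff.1 hU x hx
      have hdiff : DifferentiableOn ℝ
          (fun z : ℝ × ℝ => (f₂ z - z.1 - z.2 + 1) * Real.exp z.1) (Metric.ball x ε) :=
        fun y hy => ((hzero y (hball hy)).differentiableAt).differentiableWithinAt
      have hder0 : ∀ y ∈ Metric.ball x ε,
          fderivWithin ℝ (fun z : ℝ × ℝ => (f₂ z - z.1 - z.2 + 1) * Real.exp z.1)
            (Metric.ball x ε) y = 0 := by
        intro y hy
        rw [fderivWithin_of_isOpen Metric.isOpen_ball hy]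
        exact (hzero y (hball hy)).fderiv
      filter_upwards [Metric.ball_mem_nhds x hε] with y hy
      exact (convex_ball x ε).is_const_of_fderivWithin_eq_zero hdiff hder0 hy
        (Metric.mem_ball_self hε)
    have hconst := const_of_locally_const hU hconn
      (fun z : ℝ × ℝ => (f₂ z - z.1 - z.2 + 1) * Real.exp z.1) hloc x₀ hx₀
    refine ⟨(f₂ x₀ - x₀.1 - x₀.2 + 1) * Real.exp x₀.1, ?_⟩
    intro z hz
    have hc : (f₂ z - z.1 - z.2 + 1) * Real.exp z.1
        = (f₂ x₀ - x₀.1 - x₀.2 + 1) * Real.exp x₀.1 := hconst z hz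
    have hne' : Real.exp z.1 ≠ 0 := Real.exp_ne_zero _
    have h2 : f₂ z - z.1 - z.2 + 1
        = (f₂ x₀ - x₀.1 - x₀.2 + 1) * Real.exp x₀.1 * Real.exp (-z.1) := by
      rw [Real.exp_neg, eq_mul_inv_iff_mul_eq₀ hne']
      exact hc
    linarith
  · -- Reverse direction
    rintro ⟨h₁, c, h₂⟩ z hz
    have e1 : fderiv ℝ f₁ z = fderiv ℝ (fun p : ℝ × ℝ => p.1 + p.2 + 1) z := by
      apply Filter.EventuallyEq.fderiv_eq
      filter_upwards [hU.mem_nhds hz] with y hy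
      exact h₁ y hy
    have d1 : HasFDerivAt (fun p : ℝ × ℝ => p.1 + p.2 + 1)
        (ContinuousLinearMap.fst ℝ ℝ ℝ + ContinuousLinearMap.snd ℝ ℝ ℝ) z :=
      (hasFDerivAt_fst.add hasFDerivAt_snd).add_const 1
    have e2 : fderiv ℝ f₂ z = fderiv ℝ (fun p : ℝ × ℝ => p.1 + p.2 - 1 + c * Real.exp (-p.1)) z := by
      apply Filter.EventuallyEq.fderiv_eq
      filter_upwards [hU.mem_nhds hz] with y hy
      exact h₂ y hy
    have hexp : HasFDerivAt (fun p : ℝ × ℝ => Real.exp (-p.1))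
        (Real.exp (-z.1) • (-(ContinuousLinearMap.fst ℝ ℝ ℝ))) z :=
      (hasFDerivAt_fst.neg).exp
    have d2 : HasFDerivAt (fun p : ℝ × ℝ => p.1 + p.2 - 1 + c * Real.exp (-p.1))
        (ContinuousLinearMap.fst ℝ ℝ ℝ + ContinuousLinearMap.snd ℝ ℝ ℝ
          + c • (Real.exp (-z.1) • (-(ContinuousLinearMap.fst ℝ ℝ ℝ)))) z :=
      ((hasFDerivAt_fst.add hasFDerivAt_snd).sub_const 1).add (hexp.const_mul c)
    refine ⟨?_, ?_, ?_, ?_⟩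
    · rw [e1, d1.fderiv, h₁ z hz]
      simp only [ContinuousLinearMap.add_apply, ContinuousLinearMap.coe_fst',
        ContinuousLinearMap.coe_snd']
      ring
    · rw [e1, d1.fderiv, h₁ z hz]
      simp only [ContinuousLinearMap.add_apply, ContinuousLinearMap.coe_fst',
        ContinuousLinearMap.coe_snd']
      ring
    · rw [e2, d2.fderiv, h₂ z hz]
      simp only [ContinuousLinearMap.add_apply, ContinuousLinearMap.smul_apply,
        ContinuousLinearMap.neg_apply, ContinuousLinearMap.coe_fst',
        ContinuousLinearMap.coe_snd', smul_eq_mul]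
      ring
    · rw [e2, d2.fderiv]
      simp only [ContinuousLinearMap.add_apply, ContinuousLinearMap.smul_apply,
        ContinuousLinearMap.neg_apply, ContinuousLinearMap.coe_fst',
        ContinuousLinearMap.coe_snd', smul_eq_mul]
      ring
end

section
/- A point (a, b, p, q) ∈ ℝ⁴ lies on the graph of a local C² solution of the system — that is, there exist an open neighborhood U of (a,b) in ℝ² and C² functions f₁, f₂ : U → ℝ with f₁(a,b) = p, f₂(a,b) = q satisfying ∂f₁/∂x₁ = f₁−x₁−x₂, ∂f₁/∂x₂ = f₁²−x₁²−x₂²−2x₁−2x₂−2x₁x₂, ∂f₂/∂x₁ = −f₂+x₁+x₂, ∂f₂/∂x₂ = 1 on U — if and only if p = a+b+1. Moreover, when p = a+b+1 the solution can be chosen to be defined and C^∞ on all of ℝ². -/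
open ContinuousLinearMap Filter Topology

private lemma snd_deriv_apply {f : ℝ × ℝ → ℝ} {x : ℝ × ℝ}
    (hd : DifferentiableAt ℝ (fderiv ℝ f) x) (v w : ℝ × ℝ) :
    fderiv ℝ (fun z => fderiv ℝ f z w) x v = fderiv ℝ (fderiv ℝ f) x v w := by
  have h := ((ContinuousLinearMap.apply ℝ ℝ w).hasFDerivAt).comp x hd.hasFDerivAt
  have : (fun z => fderiv ℝ f z w) = (ContinuousLinearMap.apply ℝ ℝ w) ∘ (fderiv ℝ f) := rfl
  rw [this, h.fderiv]
  simp

private lemma key_sq {U : Set (ℝ × ℝ)} (hU : IsOpen U) {f : ℝ × ℝ → ℝ}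
    (hf : ContDiffOn ℝ 2 f U)
    (hpde : ∀ z ∈ U, fderiv ℝ f z (1, 0) = f z - z.1 - z.2 ∧
      fderiv ℝ f z (0, 1) =
        (f z) ^ 2 - z.1 ^ 2 - z.2 ^ 2 - 2 * z.1 - 2 * z.2 - 2 * z.1 * z.2) :
    ∀ x ∈ U, (f x - x.1 - x.2) ^ 2 = 1 := by
  intro x hx
  have hmem : U ∈ 𝓝 x := hU.mem_nhds hx
  have hx2 : ContDiffAt ℝ 2 f x := hf.contDiffAt hmem
  have hdf : DifferentiableAt ℝ f x := hx2.differentiableAt (by norm_num)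
  have hdd : DifferentiableAt ℝ (fderiv ℝ f) x :=
    (hx2.fderiv_right (m := 1) (by norm_num)).differentiableAt (by norm_num)
  have hsymm : IsSymmSndFDerivAt ℝ f x := hx2.isSymmSndFDerivAt (by norm_num)
  have hev1 : (fun z => fderiv ℝ f z (1, 0)) =ᶠ[𝓝 x] fun z => f z - z.1 - z.2 := by
    filter_upwards [hmem] with z hz using (hpde z hz).1
  have hev2 : (fun z => fderiv ℝ f z (0, 1)) =ᶠ[𝓝 x] fun z =>
      f z * f z - z.1 * z.1 - z.2 * z.2 - 2 * z.1 - 2 * z.2 - 2 * z.1 * z.2 := by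
    filter_upwards [hmem] with z hz
    rw [(hpde z hz).2]; ring
  have hA : HasFDerivAt (fun z : ℝ × ℝ => f z - z.1 - z.2)
      (fderiv ℝ f x - fst ℝ ℝ ℝ - snd ℝ ℝ ℝ) x :=
    (hdf.hasFDerivAt.sub (hasFDerivAt_fst)).sub (hasFDerivAt_snd)
  have hB : HasFDerivAt (fun z : ℝ × ℝ =>
      f z * f z - z.1 * z.1 - z.2 * z.2 - 2 * z.1 - 2 * z.2 - 2 * z.1 * z.2)
      (((f x • fderiv ℝ f x + f x • fderiv ℝ f x)
          - (x.1 • fst ℝ ℝ ℝ + x.1 • fst ℝ ℝ ℝ))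
          - (x.2 • snd ℝ ℝ ℝ + x.2 • snd ℝ ℝ ℝ)
          - (2 : ℝ) • fst ℝ ℝ ℝ - (2 : ℝ) • snd ℝ ℝ ℝ
          - ((2 * x.1) • snd ℝ ℝ ℝ + x.2 • ((2 : ℝ) • fst ℝ ℝ ℝ))) x := by
    exact (((((hdf.hasFDerivAt.mul hdf.hasFDerivAt).sub
      (hasFDerivAt_fst.mul hasFDerivAt_fst)).sub
      (hasFDerivAt_snd.mul hasFDerivAt_snd)).sub
      (hasFDerivAt_fst.const_mul 2)).sub
      (hasFDerivAt_snd.const_mul 2)).sub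
      ((hasFDerivAt_fst.const_mul 2).mul hasFDerivAt_snd)
  have e1 : fderiv ℝ (fderiv ℝ f) x (0, 1) (1, 0) =
      fderiv ℝ f x (0, 1) - 1 := by
    rw [← snd_deriv_apply hdd, hev1.fderiv_eq, hA.fderiv]
    simp
  have e2 : fderiv ℝ (fderiv ℝ f) x (1, 0) (0, 1) =
      2 * f x * (fderiv ℝ f x (1, 0)) - 2 * x.1 - 2 * x.2 - 2 := by
    rw [← snd_deriv_apply hdd, hev2.fderiv_eq, hB.fderiv]
    simp
    ring
  have hs := hsymm (0, 1) (1, 0)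
  rw [e1, e2, (hpde x hx).1, (hpde x hx).2] at hs
  nlinarith [hs]

private lemma f1_deriv (z : ℝ × ℝ) :
    HasFDerivAt (fun z : ℝ × ℝ => z.1 + z.2 + 1) (fst ℝ ℝ ℝ + snd ℝ ℝ ℝ) z :=
  (hasFDerivAt_fst.add hasFDerivAt_snd).add_const 1

private lemma f2_deriv (C : ℝ) (z : ℝ × ℝ) :
    HasFDerivAt (fun z : ℝ × ℝ => z.1 + z.2 - 1 + C * Real.exp (-z.1))
      ((fst ℝ ℝ ℝ + snd ℝ ℝ ℝ) + C • (Real.exp (-z.1) • (-(fst ℝ ℝ ℝ)))) z := by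
  have h1 : HasFDerivAt (fun z : ℝ × ℝ => Real.exp (-z.1))
      (Real.exp (-z.1) • (-(fst ℝ ℝ ℝ))) z := (hasFDerivAt_fst.neg).exp
  exact ((hasFDerivAt_fst.add hasFDerivAt_snd).sub_const 1).add (h1.const_mul C)

private lemma global_sol (a b p q : ℝ) (hp : p = a + b + 1) :
    ∃ f₁ f₂ : ℝ × ℝ → ℝ, ContDiff ℝ (⊤ : ℕ∞) f₁ ∧ ContDiff ℝ (⊤ : ℕ∞) f₂ ∧
      f₁ (a, b) = p ∧ f₂ (a, b) = q ∧
      ∀ z : ℝ × ℝ,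
        fderiv ℝ f₁ z (1, 0) = f₁ z - z.1 - z.2 ∧
        fderiv ℝ f₁ z (0, 1) =
          (f₁ z) ^ 2 - z.1 ^ 2 - z.2 ^ 2 - 2 * z.1 - 2 * z.2 - 2 * z.1 * z.2 ∧
        fderiv ℝ f₂ z (1, 0) = -f₂ z + z.1 + z.2 ∧
        fderiv ℝ f₂ z (0, 1) = 1 := by
  set C : ℝ := (q - a - b + 1) * Real.exp a with hC
  refine ⟨fun z => z.1 + z.2 + 1, fun z => z.1 + z.2 - 1 + C * Real.exp (-z.1),
    ?_, ?_, by simpa using hp.symm, ?_, ?_⟩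
  · fun_prop
  · fun_prop
  · show a + b - 1 + C * Real.exp (-a) = q
    rw [hC, mul_assoc, ← Real.exp_add]
    simp
  · intro z
    rw [(f1_deriv z).fderiv, (f2_deriv C z).fderiv]
    refine ⟨by simp; ring, by simp; ring, by simp; ring, by simp⟩

/-- A point `(a, b, p, q) ∈ ℝ⁴` lies on the graph of a local `C²` solution of the example
system of first-order PDEs if and only if `p = a + b + 1`; moreover if `p = a + b + 1` the
solution can be chosen smooth and globally defined on `ℝ²`. -/
theorem example_system_local_solution_iff (a b p q : ℝ) :
    ((∃ U : Set (ℝ × ℝ), IsOpen U ∧ (a, b) ∈ U ∧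
        ∃ f₁ f₂ : ℝ × ℝ → ℝ, ContDiffOn ℝ 2 f₁ U ∧ ContDiffOn ℝ 2 f₂ U ∧
          f₁ (a, b) = p ∧ f₂ (a, b) = q ∧
          ∀ z ∈ U,
            fderiv ℝ f₁ z (1, 0) = f₁ z - z.1 - z.2 ∧
            fderiv ℝ f₁ z (0, 1) =
              (f₁ z) ^ 2 - z.1 ^ 2 - z.2 ^ 2 - 2 * z.1 - 2 * z.2 - 2 * z.1 * z.2 ∧
            fderiv ℝ f₂ z (1, 0) = -f₂ z + z.1 + z.2 ∧
            fderiv ℝ f₂ z (0, 1) = 1)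
      ↔ p = a + b + 1)
    ∧ (p = a + b + 1 →
        ∃ f₁ f₂ : ℝ × ℝ → ℝ, ContDiff ℝ (⊤ : ℕ∞) f₁ ∧ ContDiff ℝ (⊤ : ℕ∞) f₂ ∧
          f₁ (a, b) = p ∧ f₂ (a, b) = q ∧
          ∀ z : ℝ × ℝ,
            fderiv ℝ f₁ z (1, 0) = f₁ z - z.1 - z.2 ∧
            fderiv ℝ f₁ z (0, 1) =
              (f₁ z) ^ 2 - z.1 ^ 2 - z.2 ^ 2 - 2 * z.1 - 2 * z.2 - 2 * z.1 * z.2 ∧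
            fderiv ℝ f₂ z (1, 0) = -f₂ z + z.1 + z.2 ∧
            fderiv ℝ f₂ z (0, 1) = 1) := by
  constructor
  · constructor
    · rintro ⟨U, hU, hab, f₁, f₂, hf₁, hf₂, hp₁, hq₂, hpde⟩
      have hpde1 : ∀ z ∈ U, fderiv ℝ f₁ z (1, 0) = f₁ z - z.1 - z.2 ∧
          fderiv ℝ f₁ z (0, 1) =
            (f₁ z) ^ 2 - z.1 ^ 2 - z.2 ^ 2 - 2 * z.1 - 2 * z.2 - 2 * z.1 * z.2 :=
        fun z hz => ⟨(hpde z hz).1, (hpde z hz).2.1⟩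
      have hsq := key_sq hU hf₁ hpde1
      have hab_sq : (p - a - b) ^ 2 = 1 := by
        have := hsq (a, b) hab
        rwa [hp₁] at this
      -- p = a+b+1 or p = a+b-1
      have hcases : p = a + b + 1 ∨ p = a + b - 1 := by
        rcases mul_eq_zero.1 (by nlinarith [hab_sq] :
            (p - a - b - 1) * (p - a - b + 1) = 0) with h | h
        · left; linarith
        · right; linarith
      rcases hcases with h | h
      · exact h
      · -- contradiction case
        exfalso
        obtain ⟨r, hr, hball⟩ := Metric.isOpen_iff.1 hU (a, b) hab
        set A : ℝ × ℝ → ℝ := fun z => f₁ z - z.1 - z.2 with hA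
        have hAcont : ContinuousOn A (Metric.ball ((a : ℝ), b) r) :=
          (((hf₁.continuousOn.mono hball).sub continuous_fst.continuousOn).sub
            continuous_snd.continuousOn)
        have hAsq : ∀ z ∈ Metric.ball ((a : ℝ), b) r, (A z) ^ 2 = 1 :=
          fun z hz => hsq z (hball hz)
        have hAab : A (a, b) = -1 := by simp [hA, hp₁, h]; ring
        have hAneg : ∀ z ∈ Metric.ball ((a : ℝ), b) r, A z = -1 := by
          intro z hz
          by_contra hne
          have hz1 : A z = 1 := by
            have := hAsq z hz
            rcases mul_eq_zero.1 (by nlinarith : (A z - 1) * (A z + 1) = 0) with h' | h'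
            · linarith
            · exact absurd (by linarith) hne
          have hpc : IsPreconnected (Metric.ball ((a : ℝ), b) r) :=
            (convex_ball _ _).isPreconnected
          have himv := hpc.intermediate_value (Metric.mem_ball_self hr) hz hAcont
          have h0 : (0 : ℝ) ∈ Set.Icc (A (a, b)) (A z) := by
            rw [hAab, hz1]; constructor <;> norm_num
          obtain ⟨w, hw, hw0⟩ := himv h0
          have := hAsq w hw
          rw [hw0] at this
          norm_num at this
        -- so f₁ = x+y-1 near (a,b)
        have hev : f₁ =ᶠ[𝓝 ((a : ℝ), b)] fun z => z.1 + z.2 - 1 := by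
          filter_upwards [Metric.ball_mem_nhds _ hr] with z hz
          have := hAneg z hz
          simp only [hA] at this
          linarith
        have hder : HasFDerivAt (fun z : ℝ × ℝ => z.1 + z.2 - 1)
            (fst ℝ ℝ ℝ + snd ℝ ℝ ℝ) ((a : ℝ), b) :=
          (hasFDerivAt_fst.add hasFDerivAt_snd).sub_const 1
        have h1 : fderiv ℝ f₁ ((a : ℝ), b) (1, 0) = 1 := by
          rw [hev.fderiv_eq, hder.fderiv]; simp
        have h2 := (hpde (a, b) hab).1
        rw [h1, hp₁] at h2
        simp at h2
        linarith
    · intro hp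
      obtain ⟨f₁, f₂, hc₁, hc₂, hp₁, hq₂, hpde⟩ := global_sol a b p q hp
      exact ⟨Set.univ, isOpen_univ, trivial, f₁, f₂,
        (hc₁.of_le (by
          rw [show (2 : WithTop ℕ∞) = ((2:ℕ∞) : WithTop ℕ∞) from rfl, WithTop.coe_le_coe]
          exact le_top)).contDiffOn, (hc₂.of_le (by
          rw [show (2 : WithTop ℕ∞) = ((2:ℕ∞) : WithTop ℕ∞) from rfl, WithTop.coe_le_coe]
          exact le_top)).contDiffOn,
        hp₁, hq₂, fun z _ => hpde z⟩
  · exact global_sol a b p q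
end

section
/- Let L : ℝᵐ × ℝᴺ × (ℝᴺ)ᵐ → ℝ be smooth, and let η : ℝᵐ × ℝᴺ → ℝᴺ (components ηᴬ) and ξ : ℝᵐ × ℝᴺ → ℝᵐ (components ξᵘ) be smooth. Assume the identity, valid for all (x, y, v) ∈ ℝᵐ × ℝᴺ × (ℝᴺ)ᵐ: Σ_A (∂L/∂yᴬ)(x,y,v) ηᴬ(x,y) + Σ_{A,μ} (∂L/∂vᴬ_μ)(x,y,v) (∂ηᴬ/∂xᵘ(x,y) + Σ_B vᴮ_μ ∂ηᴬ/∂yᴮ(x,y)) = Σ_μ (∂ξᵘ/∂xᵘ(x,y) + Σ_A vᴬ_μ ∂ξᵘ/∂yᴬ(x,y)). Then for every C² map φ : ℝᵐ → ℝᴺ satisfying the Euler–Lagrange equations, the current Jᵘ(x) = ξᵘ(x, φ(x)) − Σ_A (∂L/∂vᴬ_μ)(x, φ(x), Dφ(x)) ηᴬ(x, φ(x)) is divergence-free: Σ_μ ∂Jᵘ/∂xᵘ(x) = 0 for all x ∈ ℝᵐ. -/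
open scoped BigOperators

private lemma fderiv_comp_eval {m N : ℕ} (φ : (Fin m → ℝ) → (Fin N → ℝ)) (x : Fin m → ℝ)
    (hφ : DifferentiableAt ℝ φ x) (B : Fin N) (v : Fin m → ℝ) :
    fderiv ℝ (fun x' => φ x' B) x v = fderiv ℝ φ x v B := by
  have h : HasFDerivAt (fun x' => φ x' B)
      (((ContinuousLinearMap.proj B : (Fin N → ℝ) →L[ℝ] ℝ)).comp (fderiv ℝ φ x)) x :=
    ((ContinuousLinearMap.proj B : (Fin N → ℝ) →L[ℝ] ℝ)).hasFDerivAt.comp x hφ.hasFDerivAt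
  rw [h.fderiv]; rfl

private lemma clm_decomp {m N : ℕ} (g : ((Fin m → ℝ) × (Fin N → ℝ)) →L[ℝ] ℝ)
    (u : Fin m → ℝ) (w : Fin N → ℝ) :
    g (u, w) = g (u, 0) + ∑ B : Fin N, w B * g (0, Pi.single B 1) := by
  have h : ((u, w) : (Fin m → ℝ) × (Fin N → ℝ))
      = (u, 0) + ∑ B : Fin N, w B • ((0, Pi.single B 1) : (Fin m → ℝ) × (Fin N → ℝ)) := by
    ext i
    · simp [Prod.fst_sum]
    · simp only [Prod.snd_add, Prod.snd_sum, Prod.smul_snd]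
      rw [show (∑ B : Fin N, w B • (Pi.single B 1 : Fin N → ℝ)) = w by
        rw [← Finset.univ_sum_single w]
        refine Finset.sum_congr rfl fun B _ => ?_
        ext j
        rw [Finset.univ_sum_single w]
        by_cases hj : j = B <;> simp [hj, Pi.single_apply]]
      simp
  rw [h, map_add, map_sum]
  congr 1
  refine Finset.sum_congr rfl fun B _ => ?_
  rw [map_smul, smul_eq_mul]

private lemma chain_rule {m N : ℕ} (f : (Fin m → ℝ) × (Fin N → ℝ) → ℝ)
    (φ : (Fin m → ℝ) → (Fin N → ℝ)) (x : Fin m → ℝ)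
    (hf : DifferentiableAt ℝ f (x, φ x)) (hφ : DifferentiableAt ℝ φ x) (u : Fin m → ℝ) :
    fderiv ℝ (fun x' => f (x', φ x')) x u
      = fderiv ℝ f (x, φ x) (u, 0)
        + ∑ B : Fin N, fderiv ℝ φ x u B * fderiv ℝ f (x, φ x) (0, Pi.single B 1) := by
  have h1 : HasFDerivAt (fun x' => (x', φ x'))
      ((ContinuousLinearMap.id ℝ (Fin m → ℝ)).prod (fderiv ℝ φ x)) x :=
    (hasFDerivAt_id x).prodMk hφ.hasFDerivAt
  have h2 : HasFDerivAt (fun x' => f (x', φ x'))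
      ((fderiv ℝ f (x, φ x)).comp
        ((ContinuousLinearMap.id ℝ (Fin m → ℝ)).prod (fderiv ℝ φ x))) x :=
    hf.hasFDerivAt.comp x h1
  rw [h2.fderiv]
  exact clm_decomp (fderiv ℝ f (x, φ x)) u (fderiv ℝ φ x u)

/-- Noether's theorem in coordinates: if `(η, ξ)` is an infinitesimal symmetry of the
first-order Lagrangian `L` (the prolongation identity holds), then along every `C²` solution
`φ` of the Euler–Lagrange equations the Noether current
`Jᵘ = ξᵘ − Σ_A (∂L/∂vᴬ_μ) ηᴬ` is divergence-free. -/
theorem noether_current_divergence_free (m N : ℕ)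
    (L : (Fin m → ℝ) × (Fin N → ℝ) × (Fin N → Fin m → ℝ) → ℝ)
    (hL : ContDiff ℝ (⊤ : ℕ∞) L)
    (η : (Fin m → ℝ) × (Fin N → ℝ) → Fin N → ℝ)
    (hη : ContDiff ℝ (⊤ : ℕ∞) η)
    (ξ : (Fin m → ℝ) × (Fin N → ℝ) → Fin m → ℝ)
    (hξ : ContDiff ℝ (⊤ : ℕ∞) ξ)
    (hsym : ∀ (x : Fin m → ℝ) (y : Fin N → ℝ) (v : Fin N → Fin m → ℝ),
      (∑ A : Fin N, fderiv ℝ L (x, y, v) (0, Pi.single A 1, 0) * η (x, y) A)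
        + ∑ A : Fin N, ∑ μ : Fin m,
            fderiv ℝ L (x, y, v) (0, 0, Pi.single A (Pi.single μ 1)) *
              (fderiv ℝ (fun q => η q A) (x, y) (Pi.single μ 1, 0)
                + ∑ B : Fin N, v B μ * fderiv ℝ (fun q => η q A) (x, y) (0, Pi.single B 1))
      = ∑ μ : Fin m,
          (fderiv ℝ (fun q => ξ q μ) (x, y) (Pi.single μ 1, 0)
            + ∑ A : Fin N, v A μ * fderiv ℝ (fun q => ξ q μ) (x, y) (0, Pi.single A 1))) :
    ∀ φ : (Fin m → ℝ) → (Fin N → ℝ), ContDiff ℝ 2 φ →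
      (∀ (A : Fin N) (x : Fin m → ℝ),
        fderiv ℝ L (x, φ x, fun B ν => fderiv ℝ (fun x' => φ x' B) x (Pi.single ν 1))
            (0, Pi.single A 1, 0)
          - ∑ μ : Fin m,
              fderiv ℝ (fun x' => fderiv ℝ L
                  (x', φ x', fun B ν => fderiv ℝ (fun x'' => φ x'' B) x' (Pi.single ν 1))
                  (0, 0, Pi.single A (Pi.single μ 1)))
                x (Pi.single μ 1) = 0) →
      ∀ x : Fin m → ℝ,
        ∑ μ : Fin m,
          fderiv ℝ (fun x' =>
              ξ (x', φ x') μ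
                - ∑ A : Fin N,
                    fderiv ℝ L
                        (x', φ x',
                          fun B ν => fderiv ℝ (fun x'' => φ x'' B) x' (Pi.single ν 1))
                        (0, 0, Pi.single A (Pi.single μ 1)) * η (x', φ x') A)
            x (Pi.single μ 1) = 0 := by
  intro φ hφ hEL x
  have hφ1 : Differentiable ℝ φ := hφ.differentiable (by norm_num)
  -- differentiability of the momentum map
  have hDφeq : (fun x' => (fun (B : Fin N) (ν : Fin m) =>
        fderiv ℝ (fun x'' => φ x'' B) x' (Pi.single ν 1)))
      = fun x' B ν => fderiv ℝ φ x' (Pi.single ν 1) B := by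
    funext x' B ν; exact fderiv_comp_eval φ x' (hφ1 x') B _
  have hfd : ContDiff ℝ 1 (fderiv ℝ φ) := hφ.fderiv_right (by norm_num)
  have hDφ1 : ContDiff ℝ 1 (fun x' => (fun (B : Fin N) (ν : Fin m) =>
      fderiv ℝ (fun x'' => φ x'' B) x' (Pi.single ν 1))) := by
    rw [hDφeq]
    exact contDiff_pi.2 fun B => contDiff_pi.2 fun ν =>
      ((ContinuousLinearMap.proj B : (Fin N → ℝ) →L[ℝ] ℝ)).contDiff.comp
        (((ContinuousLinearMap.apply ℝ (Fin N → ℝ)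
            (Pi.single ν 1 : Fin m → ℝ)).contDiff).comp hfd)
  have hΨ : ContDiff ℝ 1 (fun x' =>
      ((x', φ x', fun (B : Fin N) (ν : Fin m) =>
          fderiv ℝ (fun x'' => φ x'' B) x' (Pi.single ν 1)) :
        (Fin m → ℝ) × (Fin N → ℝ) × (Fin N → Fin m → ℝ))) :=
    contDiff_id.prodMk ((hφ.of_le (by norm_num)).prodMk hDφ1)
  have hL1 : ContDiff ℝ 1 (fderiv ℝ L) := hL.fderiv_right (by norm_cast)
  have hp : ∀ (A : Fin N) (μ : Fin m), Differentiable ℝ (fun x' =>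
      fderiv ℝ L (x', φ x', fun B ν => fderiv ℝ (fun x'' => φ x'' B) x' (Pi.single ν 1))
        (0, 0, Pi.single A (Pi.single μ 1))) := by
    intro A μ
    have : ContDiff ℝ 1 (fun x' =>
        fderiv ℝ L (x', φ x', fun B ν => fderiv ℝ (fun x'' => φ x'' B) x' (Pi.single ν 1))
          (0, 0, Pi.single A (Pi.single μ 1))) :=
      (ContinuousLinearMap.apply ℝ ℝ
        ((0, 0, Pi.single A (Pi.single μ 1)) :
          (Fin m → ℝ) × (Fin N → ℝ) × (Fin N → Fin m → ℝ))).contDiff.comp (hL1.comp hΨ)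
    exact this.differentiable one_ne_zero
  have hηA : ∀ A : Fin N, Differentiable ℝ (fun q => η q A) := fun A =>
    ((ContinuousLinearMap.proj A : (Fin N → ℝ) →L[ℝ] ℝ)).differentiable.comp
      (hη.differentiable (by norm_cast))
  have hξμ : ∀ μ : Fin m, Differentiable ℝ (fun q => ξ q μ) := fun μ =>
    ((ContinuousLinearMap.proj μ : (Fin m → ℝ) →L[ℝ] ℝ)).differentiable.comp
      (hξ.differentiable (by norm_cast))
  have hΦ : Differentiable ℝ (fun x' => ((x', φ x') : (Fin m → ℝ) × (Fin N → ℝ))) :=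
    differentiable_id.prodMk hφ1
  have hηΦ : ∀ A : Fin N, Differentiable ℝ (fun x' => η (x', φ x') A) := fun A =>
    (hηA A).comp hΦ
  have hξΦ : ∀ μ : Fin m, Differentiable ℝ (fun x' => ξ (x', φ x') μ) := fun μ =>
    (hξμ μ).comp hΦ
  -- step 1: expand the derivative of the current
  have step1 : ∀ μ : Fin m,
      fderiv ℝ (fun x' =>
          ξ (x', φ x') μ
            - ∑ A : Fin N,
                fderiv ℝ L (x', φ x',
                    fun B ν => fderiv ℝ (fun x'' => φ x'' B) x' (Pi.single ν 1))
                  (0, 0, Pi.single A (Pi.single μ 1)) * η (x', φ x') A)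
        x (Pi.single μ 1)
      = fderiv ℝ (fun x' => ξ (x', φ x') μ) x (Pi.single μ 1)
        - ∑ A : Fin N,
            (fderiv ℝ (fun x' =>
                fderiv ℝ L (x', φ x',
                    fun B ν => fderiv ℝ (fun x'' => φ x'' B) x' (Pi.single ν 1))
                  (0, 0, Pi.single A (Pi.single μ 1))) x (Pi.single μ 1) * η (x, φ x) A
              + fderiv ℝ L (x, φ x,
                    fun B ν => fderiv ℝ (fun x'' => φ x'' B) x (Pi.single ν 1))
                  (0, 0, Pi.single A (Pi.single μ 1))
                * fderiv ℝ (fun x' => η (x', φ x') A) x (Pi.single μ 1)) := by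
    intro μ
    rw [fderiv_fun_sub ((hξΦ μ) x)
        (DifferentiableAt.fun_sum fun A _ => ((hp A μ) x).fun_mul ((hηΦ A) x)),
      fderiv_fun_sum fun A _ => ((hp A μ) x).fun_mul ((hηΦ A) x)]
    simp only [ContinuousLinearMap.coe_sub', Pi.sub_apply, ContinuousLinearMap.coe_sum',
      Finset.sum_apply]
    congr 1
    refine Finset.sum_congr rfl fun A _ => ?_
    rw [fderiv_fun_mul ((hp A μ) x) ((hηΦ A) x)]
    simp only [ContinuousLinearMap.add_apply, ContinuousLinearMap.coe_smul', Pi.smul_apply,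
      smul_eq_mul]
    ring
  -- chain rules along x' ↦ (x', φ x')
  have hchainξ : ∀ μ : Fin m,
      fderiv ℝ (fun x' => ξ (x', φ x') μ) x (Pi.single μ 1)
      = fderiv ℝ (fun q => ξ q μ) (x, φ x) (Pi.single μ 1, 0)
        + ∑ B : Fin N, fderiv ℝ (fun x'' => φ x'' B) x (Pi.single μ 1)
            * fderiv ℝ (fun q => ξ q μ) (x, φ x) (0, Pi.single B 1) := by
    intro μ
    rw [chain_rule (fun q => ξ q μ) φ x ((hξμ μ) _) (hφ1 x) _]
    congr 1
    exact Finset.sum_congr rfl fun B _ => by rw [fderiv_comp_eval φ x (hφ1 x) B]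
  have hchainη : ∀ (A : Fin N) (μ : Fin m),
      fderiv ℝ (fun x' => η (x', φ x') A) x (Pi.single μ 1)
      = fderiv ℝ (fun q => η q A) (x, φ x) (Pi.single μ 1, 0)
        + ∑ B : Fin N, fderiv ℝ (fun x'' => φ x'' B) x (Pi.single μ 1)
            * fderiv ℝ (fun q => η q A) (x, φ x) (0, Pi.single B 1) := by
    intro A μ
    rw [chain_rule (fun q => η q A) φ x ((hηA A) _) (hφ1 x) _]
    congr 1
    exact Finset.sum_congr rfl fun B _ => by rw [fderiv_comp_eval φ x (hφ1 x) B]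
  -- assemble
  rw [Finset.sum_congr rfl fun μ _ => step1 μ, Finset.sum_sub_distrib, sub_eq_zero,
    Finset.sum_congr rfl fun μ _ => hchainξ μ]
  have hsym' := hsym x (φ x) (fun B ν => fderiv ℝ (fun x'' => φ x'' B) x (Pi.single ν 1))
  rw [← hsym']
  conv_rhs => rw [Finset.sum_comm]
  rw [← Finset.sum_add_distrib]
  refine Finset.sum_congr rfl fun A _ => ?_
  rw [show fderiv ℝ L (x, φ x,
        fun B ν => fderiv ℝ (fun x'' => φ x'' B) x (Pi.single ν 1)) (0, Pi.single A 1, 0)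
      = ∑ μ : Fin m, fderiv ℝ (fun x' =>
          fderiv ℝ L (x', φ x',
              fun B ν => fderiv ℝ (fun x'' => φ x'' B) x' (Pi.single ν 1))
            (0, 0, Pi.single A (Pi.single μ 1))) x (Pi.single μ 1)
      from sub_eq_zero.mp (hEL A x), Finset.sum_mul, ← Finset.sum_add_distrib]
  exact Finset.sum_congr rfl fun μ _ => by rw [hchainη A μ]
end
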